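/- Let X be a normal variety, K ⊆ WDiv(X) a finitely generated subgroup mapping onto Cl(X), L ⊆ K a subgroup of finite index. If the Veronese subalgebra A = ⊕_{D ∈ L} Γ(X, O_X(D)) is a finitely generated ℂ-algebra, then so is R = ⊕_{D ∈ K} Γ(X, O_X(D)). -/

import Mathlib

/-!
As `K/L` is finite of exponent dividing `n = [K : L]`, a nonzero section `s` of degree `d ∈ K`
has `sⁿ ∈ A`, so multiplying by `sⁿ⁻¹`, a unit of the group algebra `F[WDiv]`, embeds the
`A`-span of the sections with degrees in the coset `d + L` into `A`. Since `A` is Noetherian,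
each of these finitely many pieces is a finite `A`-module, hence so is `R`, which is then
generated by the generators of `A` together with finitely many module generators.
-/

open AddMonoidAlgebra Submodule

section Subalgebra

variable {R S : Type*} [CommRing R] [CommRing S] [Algebra R S]

theorem Subalgebra.fg_of_fg_of_coe_submodule_eq {A B : Subalgebra R S} (hA : A.FG)
    {M : Submodule A S} (hM : M.FG) (hMB : (M : Set S) = B) : B.FG := by
  classical
  obtain ⟨s, rfl⟩ := hA
  obtain ⟨t, rfl⟩ := hM
  have hAB : Algebra.adjoin R (s : Set S) ≤ B := fun a ha => by
    have h1 : (1 : S) ∈ span (Algebra.adjoin R (s : Set S)) (t : Set S) := by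
      rw [← SetLike.mem_coe, hMB]; exact B.one_mem
    rw [← SetLike.mem_coe, ← hMB]
    simpa [Subalgebra.smul_def] using
      Submodule.smul_mem _ (⟨a, ha⟩ : Algebra.adjoin R (s : Set S)) h1
  refine ⟨s ∪ t, le_antisymm ?_ ?_⟩
  · rw [Algebra.adjoin_le_iff, Finset.coe_union, Set.union_subset_iff, ← hMB]
    exact ⟨hMB ▸ (Algebra.subset_adjoin.trans hAB), subset_span⟩
  · rw [← SetLike.coe_subset_coe, ← hMB, Finset.coe_union,
      Algebra.adjoin_union_eq_adjoin_adjoin]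
    exact Algebra.span_le_adjoin _ _

theorem Algebra.coe_span_adjoin_eq_adjoin {Y : Set S} {M : Submonoid S} (hYM : Y ⊆ M) :
    (span (Algebra.adjoin R Y) (M : Set S) : Set S) = Algebra.adjoin R (M : Set S) := by
  conv_rhs => rw [← Set.union_eq_self_of_subset_left hYM, Algebra.adjoin_union_eq_adjoin_adjoin,
    Subalgebra.coe_restrictScalars, ← Subalgebra.coe_toSubmodule, Algebra.adjoin_eq_span,
    Submonoid.closure_eq]

theorem Subalgebra.fg_span_of_units_mul_mem {A : Subalgebra R S} [IsNoetherianRing A]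
    {P : Set S} (u : Sˣ) (hP : ∀ x ∈ P, ↑u * x ∈ A) : (span A P).FG :=
  (fg_span_singleton (↑u⁻¹ : S)).of_le <| span_le.mpr fun x hx =>
    mem_span_singleton.mpr ⟨⟨_, hP x hx⟩, by simp [Subalgebra.smul_def, mul_comm]⟩

end Subalgebra

theorem AddMonoidAlgebra.isUnit_single {R G : Type*} [Semiring R] [AddGroup G] {a : R}
    (ha : IsUnit a) (g : G) : IsUnit (single g a) := by
  refine ⟨⟨single g a, single (-g) ↑ha.unit⁻¹, ?_, ?_⟩, rfl⟩ <;> simp [single_mul_single, one_def]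

theorem AddSubgroup.exists_sub_out_mem {G : Type*} [AddCommGroup G] {H K : AddSubgroup G}
    {D : G} (hD : D ∈ K) : ∃ q : K ⧸ H.addSubgroupOf K, D - (q.out : G) ∈ H := by
  obtain ⟨h, hh⟩ := QuotientAddGroup.mk_out_eq_add (H.addSubgroupOf K) ⟨D, hD⟩
  refine ⟨(⟨D, hD⟩ : K), ?_⟩
  rw [hh, AddSubgroup.coe_add, sub_add_cancel_left]
  exact neg_mem (AddSubgroup.mem_addSubgroupOf.mp h.2)

section Homogeneous

variable {k F G : Type*} [Semiring k] [Field F] [Module k F] (Γ : G → Submodule k F)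

def homogeneousIn (S : Set G) : Set (AddMonoidAlgebra F G) :=
  {x | ∃ D ∈ S, ∃ a ∈ Γ D, x = single D a}

variable {Γ}

theorem homogeneousIn_mono {S T : Set G} (hST : S ⊆ T) :
    homogeneousIn Γ S ⊆ homogeneousIn Γ T :=
  fun _ ⟨D, hD, a, ha, hx⟩ => ⟨D, hST hD, a, ha, hx⟩

theorem homogeneousIn_subset_iUnion {ι : Type*} {S : Set G} {T : ι → Set G}
    (hST : S ⊆ ⋃ i, T i) : homogeneousIn Γ S ⊆ ⋃ i, homogeneousIn Γ (T i) := by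
  rintro _ ⟨D, hD, a, ha, rfl⟩
  obtain ⟨i, hi⟩ := Set.mem_iUnion.mp (hST hD)
  exact Set.mem_iUnion.mpr ⟨i, D, hi, a, ha, rfl⟩

variable (Γ) in
def homogeneousSubmonoid [AddMonoid G] [SetLike.GradedMonoid Γ] (H : AddSubmonoid G) :
    Submonoid (AddMonoidAlgebra F G) where
  carrier := homogeneousIn Γ H
  one_mem' := ⟨0, H.zero_mem, 1, SetLike.GradedOne.one_mem, one_def⟩
  mul_mem' := by
    rintro _ _ ⟨D, hD, a, ha, rfl⟩ ⟨E, hE, b, hb, rfl⟩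
    exact ⟨D + E, H.add_mem hD hE, a * b, SetLike.mul_mem_graded ha hb, single_mul_single ..⟩

theorem exists_units_mul_mem_homogeneousIn [AddCommGroup G] [SetLike.GradedMonoid Γ]
    {H : AddSubgroup G} {n : ℕ} {d : G} (hn : n ≠ 0) (hd : n • d ∈ H) :
    ∃ u : (AddMonoidAlgebra F G)ˣ, ∀ x ∈ homogeneousIn Γ {D | D - d ∈ H},
      ↑u * x ∈ homogeneousIn Γ H := by
  by_cases h : ∃ D₀, D₀ - d ∈ H ∧ ∃ a₀ ∈ Γ D₀, a₀ ≠ 0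
  · obtain ⟨D₀, hD₀, a₀, ha₀, ha₀_ne⟩ := h
    obtain ⟨m, rfl⟩ := Nat.exists_eq_succ_of_ne_zero hn
    refine ⟨(isUnit_single (pow_ne_zero m ha₀_ne).isUnit (m • D₀)).unit, ?_⟩
    rintro _ ⟨D, hD, a, ha, rfl⟩
    refine ⟨m • D₀ + D, ?_, a₀ ^ m * a, SetLike.mul_mem_graded (SetLike.pow_mem_graded m ha₀) ha,
      single_mul_single ..⟩
    have : m • D₀ + D = (m + 1) • d + m • (D₀ - d) + (D - d) := by module
    rw [this]
    exact add_mem (add_mem hd (nsmul_mem hD₀ m)) hD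
  · push Not at h
    refine ⟨1, ?_⟩
    rintro _ ⟨D, hD, a, ha, rfl⟩
    exact ⟨0, zero_mem H, 0, zero_mem _, by simp [h D hD a ha]⟩

end Homogeneous

theorem stmt_15_general
    (F : Type*) [Field F] [Algebra ℂ F]
    (WDiv : Type*) [AddCommGroup WDiv]
    (Γ : WDiv → Submodule ℂ F)
    (one_mem : (1 : F) ∈ Γ 0)
    (mul_mem : ∀ {D E : WDiv} {a b : F}, a ∈ Γ D → b ∈ Γ E → a * b ∈ Γ (D + E))
    (Kgrp : AddSubgroup WDiv)
    (Lgrp : AddSubgroup WDiv) (hLK : Lgrp ≤ Kgrp)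
    (hindex : (Lgrp.addSubgroupOf Kgrp).index ≠ 0)
    (hA : (Algebra.adjoin ℂ {x : AddMonoidAlgebra F WDiv |
        ∃ D ∈ Lgrp, ∃ a ∈ Γ D, x = AddMonoidAlgebra.single D a}).FG) :
    (Algebra.adjoin ℂ {x : AddMonoidAlgebra F WDiv |
        ∃ D ∈ Kgrp, ∃ a ∈ Γ D, x = AddMonoidAlgebra.single D a}).FG := by
  have : SetLike.GradedMonoid Γ := { one_mem := one_mem, mul_mem := fun _ _ _ _ => mul_mem }
  let A := Algebra.adjoin ℂ (homogeneousIn Γ Lgrp)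
  have : Algebra.FiniteType ℂ A := (Subalgebra.fg_iff_finiteType A).mp hA
  have : IsNoetherianRing A := Algebra.FiniteType.isNoetherianRing ℂ A
  have : (Lgrp.addSubgroupOf Kgrp).FiniteIndex := ⟨hindex⟩
  let coset (q : Kgrp ⧸ Lgrp.addSubgroupOf Kgrp) : Set WDiv := {D | D - (q.out : WDiv) ∈ Lgrp}
  have hcover : (Kgrp : Set WDiv) ⊆ ⋃ q, coset q := fun _ hD =>
    Set.mem_iUnion.mpr (AddSubgroup.exists_sub_out_mem hD)
  have hpiece (q) : (span A (homogeneousIn Γ (coset q))).FG := by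
    obtain ⟨u, hu⟩ := exists_units_mul_mem_homogeneousIn (Γ := Γ) hindex
      (AddSubgroup.nsmul_relIndex_mem Lgrp q.out.2)
    exact Subalgebra.fg_span_of_units_mul_mem u fun x hx => Algebra.subset_adjoin (hu x hx)
  refine Subalgebra.fg_of_fg_of_coe_submodule_eq hA ?_
    (Algebra.coe_span_adjoin_eq_adjoin (M := homogeneousSubmonoid Γ Kgrp.toAddSubmonoid)
      (homogeneousIn_mono hLK))
  refine (fg_iSup _ hpiece).of_le ?_
  rw [← span_iUnion]
  exact span_mono (homogeneousIn_subset_iUnion hcover)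

/-- Let `X` be a normal variety with function field `F`, Weil divisor group `WDiv`,
spaces of sections `Γ D = Γ(X, O_X(D)) ⊆ F`, and class map `cl : WDiv → Cl(X)`.
Let `K ⊆ WDiv(X)` be a finitely generated subgroup mapping onto `Cl(X)` and
`L ⊆ K` a subgroup of finite index.  If the Veronese subalgebra
`A = ⊕_{D ∈ L} Γ(X, O_X(D))` is finitely generated over `ℂ`, then so is
`R = ⊕_{D ∈ K} Γ(X, O_X(D))`. -/
theorem stmt_15
    (F : Type*) [Field F] [Algebra ℂ F]
    (WDiv : Type*) [AddCommGroup WDiv]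
    (Γ : WDiv → Submodule ℂ F)
    (one_mem : (1 : F) ∈ Γ 0)
    (mul_mem : ∀ {D E : WDiv} {a b : F}, a ∈ Γ D → b ∈ Γ E → a * b ∈ Γ (D + E))
    (Cl : Type*) [AddCommGroup Cl] (cl : WDiv →+ Cl)
    (Kgrp : AddSubgroup WDiv) (hKfg : Kgrp.FG)
    (honto : ∀ c : Cl, ∃ D ∈ Kgrp, cl D = c)
    (Lgrp : AddSubgroup WDiv) (hLK : Lgrp ≤ Kgrp)
    (hindex : (Lgrp.addSubgroupOf Kgrp).index ≠ 0)
    (hA : (Algebra.adjoin ℂ {x : AddMonoidAlgebra F WDiv |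
        ∃ D ∈ Lgrp, ∃ a ∈ Γ D, x = AddMonoidAlgebra.single D a}).FG) :
    (Algebra.adjoin ℂ {x : AddMonoidAlgebra F WDiv |
        ∃ D ∈ Kgrp, ∃ a ∈ Γ D, x = AddMonoidAlgebra.single D a}).FG :=
  stmt_15_general F WDiv Γ one_mem mul_mem Kgrp Lgrp hLK hindex hA
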